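/- arXiv:1606.03463 — 7 statements merged into one kernel-verified Lean document; each statement's English description precedes it below -/
import Mathlib

section
/- Let (Ω, F, P) be a probability space with filtration {H_n}_{n∈ℕ} and let {R[n]}_{n∈ℕ} be a real-valued process adapted to {H_n} with R[0] a finite deterministic constant. Fix r > 0, Γ > 0, σ ∈ ℝ and ρ ∈ (0,1), and suppose for every n ∈ ℕ: (i) E[exp(r(R[n+1]−R[n])) | H_n] ≤ Γ almost surely, and (ii) almost surely on the event {R[n] ≥ σ}, E[exp(r(R[n+1]−R[n])) | H_n] ≤ ρ. Then for every n ∈ ℕ: E[exp(r·R[n])] ≤ ρ^n · exp(r·R[0]) + ((1−ρ^n)/(1−ρ))·Γ·exp(r·σ). -/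
/-!
Write `a n = E[exp (r R[n])]`. Pulling the `H_n`-measurable factor `exp (r R[n])` out of the
conditional expectation of `exp (r R[n+1])` leaves `E[exp (r (R[n+1] - R[n])) | H_n]`, which is at
most `ρ` where `R[n] ≥ σ` and at most `Γ` elsewhere, where `exp (r R[n]) ≤ exp (r σ)`. Hence
`a (n+1) ≤ ρ a n + Γ exp (r σ)`, and unrolling this linear recursion gives the geometric bound.
-/

open MeasureTheory

lemma exp_mul_le_of_drift {r x σ c ρ Γ : ℝ} (hr : 0 ≤ r) (hρ : 0 ≤ ρ) (hc : 0 ≤ c)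
    (hcΓ : c ≤ Γ) (hcρ : σ ≤ x → c ≤ ρ) :
    Real.exp (r * x) * c ≤ ρ * Real.exp (r * x) + Γ * Real.exp (r * σ) := by
  have hΓexp : 0 ≤ Γ * Real.exp (r * σ) := mul_nonneg (hc.trans hcΓ) (Real.exp_pos _).le
  by_cases hx : σ ≤ x
  · nlinarith [hcρ hx, Real.exp_pos (r * x)]
  · have hexp : Real.exp (r * x) ≤ Real.exp (r * σ) :=
      Real.exp_le_exp.mpr (mul_le_mul_of_nonneg_left (not_le.mp hx).le hr)
    nlinarith [mul_le_mul hexp hcΓ hc (Real.exp_pos _).le, Real.exp_pos (r * x)]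

lemma integral_exp_le_of_condExp_le {Ω : Type*} {m m0 : MeasurableSpace Ω} {μ : Measure Ω}
    [IsProbabilityMeasure μ] (hm : m ≤ m0) {X Y : Ω → ℝ} (hX : StronglyMeasurable[m] X)
    {r σ ρ Γ : ℝ} (hr : 0 ≤ r) (hρ : 0 ≤ ρ)
    (hintX : Integrable (fun ω => Real.exp (r * X ω)) μ)
    (hintY : Integrable (fun ω => Real.exp (r * Y ω)) μ)
    (hintYX : Integrable (fun ω => Real.exp (r * (Y ω - X ω))) μ)
    (hΓ : ∀ᵐ ω ∂μ, μ[fun ω' => Real.exp (r * (Y ω' - X ω')) | m] ω ≤ Γ)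
    (hρσ : ∀ᵐ ω ∂μ, σ ≤ X ω → μ[fun ω' => Real.exp (r * (Y ω' - X ω')) | m] ω ≤ ρ) :
    ∫ ω, Real.exp (r * Y ω) ∂μ ≤ ρ * ∫ ω, Real.exp (r * X ω) ∂μ + Γ * Real.exp (r * σ) := by
  set f : Ω → ℝ := fun ω => Real.exp (r * X ω)
  set g : Ω → ℝ := fun ω => Real.exp (r * (Y ω - X ω))
  have hfg : f * g = fun ω => Real.exp (r * Y ω) := by
    funext ω
    simp only [f, g, Pi.mul_apply, ← Real.exp_add]
    ring_nf
  have hf : StronglyMeasurable[m] f :=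
    (Real.continuous_exp.comp (continuous_const_mul r)).comp_stronglyMeasurable hX
  have hpull : μ[f * g | m] =ᵐ[μ] f * μ[g | m] :=
    condExp_mul_of_stronglyMeasurable_left hf (hfg ▸ hintY) hintYX
  have hg_nonneg : 0 ≤ᵐ[μ] μ[g | m] :=
    condExp_nonneg (Filter.Eventually.of_forall fun ω => (Real.exp_pos _).le)
  calc ∫ ω, Real.exp (r * Y ω) ∂μ = ∫ ω, f ω * μ[g | m] ω ∂μ := by
        rw [← hfg, ← integral_condExp hm]
        exact integral_congr_ae hpull
    _ ≤ ∫ ω, ρ * f ω + Γ * Real.exp (r * σ) ∂μ := by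
        refine integral_mono_ae (integrable_condExp.congr hpull)
          ((hintX.const_mul ρ).add (integrable_const _)) ?_
        filter_upwards [hΓ, hρσ, hg_nonneg] with ω hωΓ hωρ hω0
        exact exp_mul_le_of_drift hr hρ hω0 hωΓ hωρ
    _ = ρ * ∫ ω, f ω ∂μ + Γ * Real.exp (r * σ) := by
        rw [integral_add (hintX.const_mul ρ) (integrable_const _), integral_const_mul]
        simp

lemma le_pow_mul_add_geom_sum_of_le_mul_add {a : ℕ → ℝ} {ρ b : ℝ} (hρ : 0 ≤ ρ)
    (ha : ∀ n, a (n + 1) ≤ ρ * a n + b) (n : ℕ) :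
    a n ≤ ρ ^ n * a 0 + (∑ i ∈ Finset.range n, ρ ^ i) * b := by
  induction n with
  | zero => simp
  | succ n ih =>
    calc a (n + 1) ≤ ρ * a n + b := ha n
      _ ≤ ρ * (ρ ^ n * a 0 + (∑ i ∈ Finset.range n, ρ ^ i) * b) + b := by gcongr
      _ = ρ ^ (n + 1) * a 0 + (∑ i ∈ Finset.range (n + 1), ρ ^ i) * b := by
        simp only [Finset.sum_range_succ', pow_succ', ← Finset.mul_sum, pow_zero]
        ring

theorem stmt_2_general {Ω : Type*} {m0 : MeasurableSpace Ω} (μ : Measure Ω) [IsProbabilityMeasure μ]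
    (ℱ : Filtration ℕ m0) (R : ℕ → Ω → ℝ) (hadapted : Adapted ℱ R)
    (R0 : ℝ) (hR0 : ∀ ω, R 0 ω = R0)
    (r Γ σ ρ : ℝ) (hr : 0 < r) (hρ0 : 0 < ρ) (hρ1 : ρ < 1)
    (hint : ∀ n, Integrable (fun ω => Real.exp (r * R n ω)) μ)
    (hintdiff : ∀ n, Integrable (fun ω => Real.exp (r * (R (n + 1) ω - R n ω))) μ)
    (hΓbound : ∀ n, ∀ᵐ ω ∂μ,
      (μ[fun ω' => Real.exp (r * (R (n + 1) ω' - R n ω')) | ℱ n]) ω ≤ Γ)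
    (hdrift : ∀ n, ∀ᵐ ω ∂μ, σ ≤ R n ω →
      (μ[fun ω' => Real.exp (r * (R (n + 1) ω' - R n ω')) | ℱ n]) ω ≤ ρ) :
    ∀ n : ℕ, ∫ ω, Real.exp (r * R n ω) ∂μ ≤
      ρ ^ n * Real.exp (r * R0) + ((1 - ρ ^ n) / (1 - ρ)) * Γ * Real.exp (r * σ) := by
  intro n
  have hstep : ∀ k, ∫ ω, Real.exp (r * R (k + 1) ω) ∂μ ≤
      ρ * ∫ ω, Real.exp (r * R k ω) ∂μ + Γ * Real.exp (r * σ) := fun k =>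
    integral_exp_le_of_condExp_le (ℱ.le k) (hadapted k).stronglyMeasurable hr.le hρ0.le
      (hint k) (hint (k + 1)) (hintdiff k) (hΓbound k) (hdrift k)
  have hstart : ∫ ω, Real.exp (r * R 0 ω) ∂μ = Real.exp (r * R0) := by simp [hR0]
  calc ∫ ω, Real.exp (r * R n ω) ∂μ
      ≤ ρ ^ n * Real.exp (r * R0) + (∑ i ∈ Finset.range n, ρ ^ i) * (Γ * Real.exp (r * σ)) := by
        simpa only [hstart] using le_pow_mul_add_geom_sum_of_le_mul_add
          (a := fun k => ∫ ω, Real.exp (r * R k ω) ∂μ) hρ0.le hstep n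
    _ = ρ ^ n * Real.exp (r * R0) + ((1 - ρ ^ n) / (1 - ρ)) * Γ * Real.exp (r * σ) := by
        rw [geom_sum_eq hρ1.ne, ← neg_div_neg_eq, neg_sub, neg_sub]
        ring

/-- Lemma 1 (Hajek's drift lemma): a process with uniformly bounded conditional
exponential increments and conditional contraction above level σ has exponential
moments bounded by ρ^n e^{rR[0]} + ((1-ρ^n)/(1-ρ)) Γ e^{rσ}. -/
theorem stmt_2 {Ω : Type*} {m0 : MeasurableSpace Ω} (μ : Measure Ω) [IsProbabilityMeasure μ]
    (ℱ : Filtration ℕ m0) (R : ℕ → Ω → ℝ) (hadapted : Adapted ℱ R)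
    (R0 : ℝ) (hR0 : ∀ ω, R 0 ω = R0)
    (r Γ σ ρ : ℝ) (hr : 0 < r) (hΓ : 0 < Γ) (hρ0 : 0 < ρ) (hρ1 : ρ < 1)
    (hint : ∀ n, Integrable (fun ω => Real.exp (r * R n ω)) μ)
    (hintdiff : ∀ n, Integrable (fun ω => Real.exp (r * (R (n + 1) ω - R n ω))) μ)
    (hΓbound : ∀ n, ∀ᵐ ω ∂μ,
      (μ[fun ω' => Real.exp (r * (R (n + 1) ω' - R n ω')) | ℱ n]) ω ≤ Γ)
    (hdrift : ∀ n, ∀ᵐ ω ∂μ, σ ≤ R n ω →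
      (μ[fun ω' => Real.exp (r * (R (n + 1) ω' - R n ω')) | ℱ n]) ω ≤ ρ) :
    ∀ n : ℕ, ∫ ω, Real.exp (r * R n ω) ∂μ ≤
      ρ ^ n * Real.exp (r * R0) + ((1 - ρ ^ n) / (1 - ρ)) * Γ * Real.exp (r * σ) :=
  stmt_2_general μ ℱ R hadapted R0 hR0 r Γ σ ρ hr hρ0 hρ1 hint hintdiff hΓbound hdrift
end

section
/- Let (Ω, F, P) be a probability space with filtration {H_n}_{n∈ℕ} and let {R[n]}_{n∈ℕ} be a real-valued process adapted to {H_n} with R[0] = 0. Fix r > 0, Γ > 0, σ ≥ 0 and ρ ∈ (0,1), and suppose for every n ∈ ℕ: (i) E[exp(r(R[n+1]−R[n])) | H_n] ≤ Γ almost surely, and (ii) almost surely on the event {R[n] ≥ σ}, E[exp(r(R[n+1]−R[n])) | H_n] ≤ ρ. Then for every n ∈ ℕ: E[exp(r·R[n])] ≤ 1 + Γ·exp(r·σ)/(1−ρ); in particular the exponential moments E[exp(r·R[n])] are bounded uniformly in n. -/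
/-!
Write `a n = 𝔼[exp (r R[n])]`. Factoring `exp (r R[n+1]) = exp (r R[n]) · exp (r (R[n+1] - R[n]))`
and pulling the `H_n`-measurable factor out of the conditional expectation, the drift conditions
give `a (n+1) ≤ ρ a n + Γ e^{rσ}`: above level `σ` the conditional factor is at most `ρ`, below it
`exp (r R[n]) ≤ e^{rσ}` and the factor is at most `Γ`. Since `a 0 = 1`, this affine recursion keeps
`a n` below `1 + Γ e^{rσ} / (1 - ρ)`.
-/

open MeasureTheory

theorem le_add_div_one_sub_of_le_mul_add {a : ℕ → ℝ} {A D ρ : ℝ} (hA : 0 ≤ A) (hD : 0 ≤ D)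
    (hρ0 : 0 ≤ ρ) (hρ1 : ρ < 1) (h0 : a 0 ≤ A) (hstep : ∀ n, a (n + 1) ≤ ρ * a n + D) (n : ℕ) :
    a n ≤ A + D / (1 - ρ) := by
  have hρ' : 0 < 1 - ρ := sub_pos.2 hρ1
  induction n with
  | zero => linarith [div_nonneg hD hρ'.le]
  | succ n ih =>
    have hfix : ρ * (A + D / (1 - ρ)) + D = ρ * A + D / (1 - ρ) := by
      field_simp
      ring
    calc a (n + 1) ≤ ρ * a n + D := hstep n
      _ ≤ ρ * (A + D / (1 - ρ)) + D := by gcongr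
      _ ≤ A + D / (1 - ρ) := by nlinarith

theorem exp_mul_mul_le_of_drift {r x c Γ σ ρ : ℝ} (hr : 0 ≤ r) (hρ : 0 ≤ ρ) (hc : 0 ≤ c)
    (hcΓ : c ≤ Γ) (hcρ : σ ≤ x → c ≤ ρ) :
    Real.exp (r * x) * c ≤ ρ * Real.exp (r * x) + Γ * Real.exp (r * σ) := by
  have hΓ : 0 ≤ Γ * Real.exp (r * σ) := mul_nonneg (hc.trans hcΓ) (Real.exp_pos _).le
  rcases le_or_gt σ x with hx | hx
  · have := mul_le_mul_of_nonneg_left (hcρ hx) (Real.exp_pos (r * x)).le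
    linarith
  · have hexp : Real.exp (r * x) ≤ Real.exp (r * σ) := Real.exp_le_exp.2 (by nlinarith)
    have := mul_le_mul hexp hcΓ hc (Real.exp_pos _).le
    nlinarith [mul_nonneg hρ (Real.exp_pos (r * x)).le]

theorem integral_exp_mul_le_of_condExp_le {Ω : Type*} {m m0 : MeasurableSpace Ω}
    {μ : Measure Ω} [IsProbabilityMeasure μ] (hm : m ≤ m0) {X Y : Ω → ℝ} {r Γ σ ρ : ℝ}
    (hr : 0 ≤ r) (hρ : 0 ≤ ρ) (hX : StronglyMeasurable[m] X)
    (hintX : Integrable (fun ω => Real.exp (r * X ω)) μ)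
    (hintY : Integrable (fun ω => Real.exp (r * Y ω)) μ)
    (hintΔ : Integrable (fun ω => Real.exp (r * (Y ω - X ω))) μ)
    (hΓ : ∀ᵐ ω ∂μ, (μ[fun ω' => Real.exp (r * (Y ω' - X ω')) | m]) ω ≤ Γ)
    (hdrift : ∀ᵐ ω ∂μ, σ ≤ X ω → (μ[fun ω' => Real.exp (r * (Y ω' - X ω')) | m]) ω ≤ ρ) :
    ∫ ω, Real.exp (r * Y ω) ∂μ ≤ ρ * ∫ ω, Real.exp (r * X ω) ∂μ + Γ * Real.exp (r * σ) := by
  set f : Ω → ℝ := fun ω => Real.exp (r * X ω)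
  set g : Ω → ℝ := fun ω => Real.exp (r * (Y ω - X ω))
  have hfg : (fun ω => Real.exp (r * Y ω)) = f * g := by
    funext ω
    simp only [f, g, Pi.mul_apply, ← Real.exp_add]
    ring_nf
  have hf : StronglyMeasurable[m] f :=
    Real.continuous_exp.comp_stronglyMeasurable (hX.const_mul r)
  have hpull : μ[f * g | m] =ᵐ[μ] f * μ[g | m] :=
    condExp_mul_of_stronglyMeasurable_left hf (hfg ▸ hintY) hintΔ
  have hg_nonneg : 0 ≤ᵐ[μ] μ[g | m] :=
    condExp_nonneg (.of_forall fun ω => (Real.exp_pos _).le)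
  have hbound : ∀ᵐ ω ∂μ, (f * μ[g | m]) ω ≤ ρ * f ω + Γ * Real.exp (r * σ) := by
    filter_upwards [hΓ, hdrift, hg_nonneg] with ω hΓω hdω h0ω
    exact exp_mul_mul_le_of_drift hr hρ h0ω hΓω hdω
  calc ∫ ω, Real.exp (r * Y ω) ∂μ = ∫ ω, (μ[f * g | m]) ω ∂μ := by
        rw [hfg, integral_condExp hm]
    _ = ∫ ω, (f * μ[g | m]) ω ∂μ := integral_congr_ae hpull
    _ ≤ ∫ ω, (ρ * f ω + Γ * Real.exp (r * σ)) ∂μ :=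
        integral_mono_ae (integrable_condExp.congr hpull)
          ((hintX.const_mul ρ).add (integrable_const _)) hbound
    _ = ρ * ∫ ω, f ω ∂μ + Γ * Real.exp (r * σ) := by
        rw [integral_add (hintX.const_mul ρ) (integrable_const _), integral_const_mul,
          integral_const, probReal_univ, one_smul]

theorem stmt_3_general {Ω : Type*} {m0 : MeasurableSpace Ω} (μ : Measure Ω) [IsProbabilityMeasure μ]
    (ℱ : Filtration ℕ m0) (R : ℕ → Ω → ℝ) (hadapted : Adapted ℱ R)
    (hR0 : ∀ ω, R 0 ω = 0)
    (r Γ σ ρ : ℝ) (hr : 0 < r) (hρ0 : 0 < ρ) (hρ1 : ρ < 1)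
    (hint : ∀ n, Integrable (fun ω => Real.exp (r * R n ω)) μ)
    (hintdiff : ∀ n, Integrable (fun ω => Real.exp (r * (R (n + 1) ω - R n ω))) μ)
    (hΓbound : ∀ n, ∀ᵐ ω ∂μ,
      (μ[fun ω' => Real.exp (r * (R (n + 1) ω' - R n ω')) | ℱ n]) ω ≤ Γ)
    (hdrift : ∀ n, ∀ᵐ ω ∂μ, σ ≤ R n ω →
      (μ[fun ω' => Real.exp (r * (R (n + 1) ω' - R n ω')) | ℱ n]) ω ≤ ρ) :
    ∀ n : ℕ, ∫ ω, Real.exp (r * R n ω) ∂μ ≤ 1 + Γ * Real.exp (r * σ) / (1 - ρ) := by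
  have hΓ : 0 ≤ Γ := by
    have h0 : 0 ≤ᵐ[μ] μ[fun ω => Real.exp (r * (R (0 + 1) ω - R 0 ω)) | ℱ 0] :=
      condExp_nonneg (.of_forall fun ω => (Real.exp_pos _).le)
    obtain ⟨ω, hω, h0ω⟩ := ((hΓbound 0).and h0).exists
    exact (h0ω : (0 : ℝ) ≤ _).trans hω
  refine le_add_div_one_sub_of_le_mul_add zero_le_one (by positivity) hρ0.le hρ1
    (by simp [hR0]) fun n => ?_
  exact integral_exp_mul_le_of_condExp_le (ℱ.le n) hr.le hρ0.le (hadapted n).stronglyMeasurable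
    (hint n) (hint (n + 1)) (hintdiff n) (hΓbound n) (hdrift n)

/-- Corollary 1 (exponential decay): for a process started at 0 with Hajek's drift
conditions, the exponential moments are uniformly bounded by 1 + Γe^{rσ}/(1-ρ). -/
theorem stmt_3 {Ω : Type*} {m0 : MeasurableSpace Ω} (μ : Measure Ω) [IsProbabilityMeasure μ]
    (ℱ : Filtration ℕ m0) (R : ℕ → Ω → ℝ) (hadapted : Adapted ℱ R)
    (hR0 : ∀ ω, R 0 ω = 0)
    (r Γ σ ρ : ℝ) (hr : 0 < r) (hΓ : 0 < Γ) (hσ : 0 ≤ σ) (hρ0 : 0 < ρ) (hρ1 : ρ < 1)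
    (hint : ∀ n, Integrable (fun ω => Real.exp (r * R n ω)) μ)
    (hintdiff : ∀ n, Integrable (fun ω => Real.exp (r * (R (n + 1) ω - R n ω))) μ)
    (hΓbound : ∀ n, ∀ᵐ ω ∂μ,
      (μ[fun ω' => Real.exp (r * (R (n + 1) ω' - R n ω')) | ℱ n]) ω ≤ Γ)
    (hdrift : ∀ n, ∀ᵐ ω ∂μ, σ ≤ R n ω →
      (μ[fun ω' => Real.exp (r * (R (n + 1) ω' - R n ω')) | ℱ n]) ω ≤ ρ) :
    ∀ n : ℕ, ∫ ω, Real.exp (r * R n ω) ∂μ ≤ 1 + Γ * Real.exp (r * σ) / (1 - ρ) :=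
  stmt_3_general μ ℱ R hadapted hR0 r Γ σ ρ hr hρ0 hρ1 hint hintdiff hΓbound hdrift
end

section
/- Let X and K be random variables on a probability space with |X| ≤ K almost surely, and let η > 0, B > 0, ξ > 0 be constants such that E[exp(η·K)] ≤ B and E[X] ≤ −ξ/2. Then for every r with 0 < r ≤ min{η, ξη²/(8B)}: E[exp(r·X)] ≤ 1 − rξ/2 + (2B/η²)·r², and moreover 1 − rξ/2 + (2B/η²)·r² ≤ 1 − rξ/4 < 1. -/
/-!
Comparing the exponential series term by term, `exp (a t) - 1 - a t ≤ a² (exp v - 1 - v)`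
whenever `0 ≤ a ≤ 1` and `|t| ≤ v`. With `a = r / η`, `t = η X`, `v = η K` this gives
`exp (r X) ≤ 1 + r X + (r / η)² exp (η K)` pointwise, and taking expectations gives
`E[exp (r X)] ≤ 1 - r ξ / 2 + (r / η)² B`. The choice `r ≤ ξ η² / (8 B)` makes the quadratic
term at most half of the linear gain.
-/

open MeasureTheory
open scoped Nat

theorem Real.hasSum_pow_add_two_div_factorial (x : ℝ) :
    HasSum (fun n : ℕ => x ^ (n + 2) / (n + 2)!) (Real.exp x - 1 - x) := by
  have h := NormedSpace.expSeries_div_hasSum_exp x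
  rw [← Real.exp_eq_exp_ℝ, ← hasSum_nat_add_iff' 2] at h
  simpa [Finset.sum_range_succ, sub_sub] using h

theorem Real.exp_mul_sub_one_sub_mul_le {a t v : ℝ} (ha₀ : 0 ≤ a) (ha₁ : a ≤ 1)
    (htv : |t| ≤ v) :
    Real.exp (a * t) - 1 - a * t ≤ a ^ 2 * (Real.exp v - 1 - v) := by
  refine hasSum_le (fun n => ?_) (Real.hasSum_pow_add_two_div_factorial (a * t))
    ((Real.hasSum_pow_add_two_div_factorial v).mul_left (a ^ 2))
  have hpow : (a * t) ^ (n + 2) ≤ a ^ 2 * v ^ (n + 2) :=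
    calc (a * t) ^ (n + 2) ≤ |a * t| ^ (n + 2) := (le_abs_self _).trans (abs_pow _ _).le
      _ = a ^ 2 * (a ^ n * |t| ^ (n + 2)) := by rw [abs_mul, abs_of_nonneg ha₀]; ring
      _ ≤ a ^ 2 * (1 * v ^ (n + 2)) := by gcongr; exact pow_le_one₀ ha₀ ha₁
      _ = a ^ 2 * v ^ (n + 2) := by ring
  rw [mul_div_assoc']
  gcongr

theorem Real.exp_mul_le_one_add_add_sq_mul_exp {r η x k : ℝ} (hη : 0 < η) (hr₀ : 0 ≤ r)
    (hrη : r ≤ η) (hxk : |x| ≤ k) :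
    Real.exp (r * x) ≤ 1 + r * x + (r / η) ^ 2 * Real.exp (η * k) := by
  have hηx : |η * x| ≤ η * k := by
    rw [abs_mul, abs_of_pos hη]
    exact mul_le_mul_of_nonneg_left hxk hη.le
  have hrx : r / η * (η * x) = r * x := by field_simp
  have h := Real.exp_mul_sub_one_sub_mul_le (div_nonneg hr₀ hη.le) ((div_le_one hη).2 hrη) hηx
  rw [hrx] at h
  have hk : 0 ≤ η * k := (abs_nonneg _).trans hηx
  nlinarith [sq_nonneg (r / η)]

section Integrability

variable {Ω : Type*} [MeasurableSpace Ω] {μ : Measure Ω} {X K : Ω → ℝ} {η : ℝ}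

theorem integrable_of_abs_le_of_integrable_exp_mul (hη : 0 < η)
    (hX : AEStronglyMeasurable X μ) (hXK : ∀ᵐ ω ∂μ, |X ω| ≤ K ω)
    (hK : Integrable (fun ω => Real.exp (η * K ω)) μ) : Integrable X μ := by
  refine (hK.const_mul η⁻¹).mono' hX ?_
  filter_upwards [hXK] with ω hω
  rw [Real.norm_eq_abs, le_inv_mul_iff₀ hη]
  calc η * |X ω| ≤ η * K ω := mul_le_mul_of_nonneg_left hω hη.le
    _ ≤ Real.exp (η * K ω) := (le_add_of_nonneg_right zero_le_one).trans (Real.add_one_le_exp _)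

theorem integrable_exp_mul_of_abs_le {r : ℝ} (hr₀ : 0 ≤ r) (hrη : r ≤ η)
    (hX : AEStronglyMeasurable X μ) (hXK : ∀ᵐ ω ∂μ, |X ω| ≤ K ω)
    (hK : Integrable (fun ω => Real.exp (η * K ω)) μ) :
    Integrable (fun ω => Real.exp (r * X ω)) μ := by
  refine hK.mono' (Real.continuous_exp.comp_aestronglyMeasurable (hX.const_mul r)) ?_
  filter_upwards [hXK] with ω hω
  rw [Real.norm_of_nonneg (Real.exp_pos _).le, Real.exp_le_exp]
  have hK₀ : 0 ≤ K ω := (abs_nonneg _).trans hω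
  calc r * X ω ≤ r * K ω := mul_le_mul_of_nonneg_left ((le_abs_self _).trans hω) hr₀
    _ ≤ η * K ω := mul_le_mul_of_nonneg_right hrη hK₀

theorem integral_exp_mul_le [IsProbabilityMeasure μ] {r : ℝ} (hη : 0 < η) (hr₀ : 0 ≤ r)
    (hrη : r ≤ η) (hX : AEStronglyMeasurable X μ) (hXK : ∀ᵐ ω ∂μ, |X ω| ≤ K ω)
    (hK : Integrable (fun ω => Real.exp (η * K ω)) μ) :
    ∫ ω, Real.exp (r * X ω) ∂μ ≤
      1 + r * ∫ ω, X ω ∂μ + (r / η) ^ 2 * ∫ ω, Real.exp (η * K ω) ∂μ := by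
  have hXint := integrable_of_abs_le_of_integrable_exp_mul hη hX hXK hK
  have hlin : Integrable (fun ω => 1 + r * X ω) μ := (integrable_const 1).add (hXint.const_mul r)
  calc ∫ ω, Real.exp (r * X ω) ∂μ
      ≤ ∫ ω, (1 + r * X ω + (r / η) ^ 2 * Real.exp (η * K ω)) ∂μ := by
        refine integral_mono_ae (integrable_exp_mul_of_abs_le hr₀ hrη hX hXK hK)
          (hlin.add (hK.const_mul _)) ?_
        filter_upwards [hXK] with ω hω
        exact Real.exp_mul_le_one_add_add_sq_mul_exp hη hr₀ hrη hω
    _ = 1 + r * ∫ ω, X ω ∂μ + (r / η) ^ 2 * ∫ ω, Real.exp (η * K ω) ∂μ := by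
        rw [integral_add hlin (hK.const_mul _), integral_add (integrable_const 1)
          (hXint.const_mul r), integral_const_mul, integral_const_mul]
        simp

end Integrability

theorem stmt_5_general {Ω : Type*} [MeasurableSpace Ω] (μ : Measure Ω) [IsProbabilityMeasure μ]
    (X K : Ω → ℝ) (hXmeas : Measurable X)
    (hXK : ∀ᵐ ω ∂μ, |X ω| ≤ K ω)
    (η B ξ : ℝ) (hη : 0 < η) (hB : 0 < B) (hξ : 0 < ξ)
    (hKint : Integrable (fun ω => Real.exp (η * K ω)) μ)
    (hKbound : ∫ ω, Real.exp (η * K ω) ∂μ ≤ B)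
    (hXmean : ∫ ω, X ω ∂μ ≤ -ξ / 2) :
    ∀ r : ℝ, 0 < r → r ≤ min η (ξ * η ^ 2 / (8 * B)) →
      (∫ ω, Real.exp (r * X ω) ∂μ ≤ 1 - r * ξ / 2 + (2 * B / η ^ 2) * r ^ 2) ∧
      1 - r * ξ / 2 + (2 * B / η ^ 2) * r ^ 2 ≤ 1 - r * ξ / 4 ∧
      1 - r * ξ / 4 < 1 := by
  intro r hr hrmin
  obtain ⟨hrη, hrξ⟩ := le_min_iff.1 hrmin
  have hmgf := integral_exp_mul_le hη hr.le hrη hXmeas.aestronglyMeasurable hXK hKint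
  have hdrift : r * ∫ ω, X ω ∂μ ≤ r * (-ξ / 2) := mul_le_mul_of_nonneg_left hXmean hr.le
  have hsecond : (r / η) ^ 2 * ∫ ω, Real.exp (η * K ω) ∂μ ≤ (2 * B / η ^ 2) * r ^ 2 := by
    calc (r / η) ^ 2 * ∫ ω, Real.exp (η * K ω) ∂μ ≤ (r / η) ^ 2 * B := by gcongr
      _ ≤ 2 * ((r / η) ^ 2 * B) := le_mul_of_one_le_left (by positivity) one_le_two
      _ = (2 * B / η ^ 2) * r ^ 2 := by ring
  have hquad : (2 * B / η ^ 2) * r ^ 2 ≤ r * ξ / 4 := by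
    rw [le_div_iff₀ (by positivity)] at hrξ
    rw [div_mul_eq_mul_div, div_le_iff₀ (by positivity)]
    nlinarith
  refine ⟨by linarith, by linarith, by nlinarith⟩

/-- The core computation in Lemma 2: negative drift plus an exponential-type bound on
the increment magnitude yields strict contraction of the exponential moment. -/
theorem stmt_5 {Ω : Type*} [MeasurableSpace Ω] (μ : Measure Ω) [IsProbabilityMeasure μ]
    (X K : Ω → ℝ) (hXmeas : Measurable X) (hKmeas : Measurable K)
    (hXK : ∀ᵐ ω ∂μ, |X ω| ≤ K ω)
    (η B ξ : ℝ) (hη : 0 < η) (hB : 0 < B) (hξ : 0 < ξ)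
    (hKint : Integrable (fun ω => Real.exp (η * K ω)) μ)
    (hKbound : ∫ ω, Real.exp (η * K ω) ∂μ ≤ B)
    (hXmean : ∫ ω, X ω ∂μ ≤ -ξ / 2) :
    ∀ r : ℝ, 0 < r → r ≤ min η (ξ * η ^ 2 / (8 * B)) →
      (∫ ω, Real.exp (r * X ω) ∂μ ≤ 1 - r * ξ / 2 + (2 * B / η ^ 2) * r ^ 2) ∧
      1 - r * ξ / 2 + (2 * B / η ^ 2) * r ^ 2 ≤ 1 - r * ξ / 4 ∧
      1 - r * ξ / 4 < 1 :=
  stmt_5_general μ X K hXmeas hXK η B ξ hη hB hξ hKint hKbound hXmean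
end

section
/- Let (Ω, F, P) be a probability space, L a positive integer, and for each n ∈ ℕ let T[n] and z_1[n], …, z_L[n] be real random variables with T[n] ≥ 1 almost surely. Let c_1, …, c_L ∈ ℝ. Define the virtual queue processes by Q_l[0] = 0 and Q_l[n+1] = max(Q_l[n] + z_l[n] − c_l·T[n], 0) for each l. Suppose there exist constants r > 0 and D > 0 such that E[exp(r·‖Q[n]‖)] ≤ D for every n ∈ ℕ, where ‖Q[n]‖ is the Euclidean norm of the vector (Q_1[n], …, Q_L[n]). Then with probability 1, for every l ∈ {1, …, L}: limsup_{N→∞} (Σ_{n=0}^{N−1} z_l[n]) / (Σ_{n=0}^{N−1} T[n]) ≤ c_l. -/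
/-!
Telescoping the recursion `Q[n+1] ≥ Q[n] + z[n] - c T[n]` gives
`∑_{n<N} z_l[n] ≤ c_l ∑_{n<N} T[n] + Q_l[N]`, and `∑_{n<N} T[n] ≥ N`, so it suffices that
`Q_l[N] = o(N)` almost surely. By the Chernoff bound, `P(‖Q[n]‖ ≥ ε n) ≤ D e^{-r ε n}`, which is
summable in `n`; Borel–Cantelli gives `‖Q[n]‖ < ε n` eventually, almost surely, and a countable
family of `ε`s suffices.
-/

open MeasureTheory Filter ProbabilityTheory

theorem sum_range_le_sub_of_add_le {q a : ℕ → ℝ} (h : ∀ n, q n + a n ≤ q (n + 1)) (N : ℕ) :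
    ∑ n ∈ Finset.range N, a n ≤ q N - q 0 := by
  rw [← Finset.sum_range_sub]
  exact Finset.sum_le_sum fun n _ => by linarith [h n]

theorem limsup_div_le_of_sum_le_add {sZ sT q : ℕ → ℝ} {c : ℝ} (hsT : ∀ N : ℕ, (N : ℝ) ≤ sT N)
    (hsZ : ∀ N, sZ N ≤ c * sT N + q N) (hq : ∀ ε > 0, ∀ᶠ N in atTop, q N < ε * N) :
    limsup (fun N => ((sZ N / sT N : ℝ) : EReal)) atTop ≤ c := by
  refine EReal.le_of_forall_lt_iff_le.mp fun x hx => ?_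
  have hcx : 0 < x - c := sub_pos.mpr (EReal.coe_lt_coe_iff.mp hx)
  refine limsup_le_of_le (by isBoundedDefault) ?_
  filter_upwards [hq _ hcx, eventually_gt_atTop 0] with N hqN hN
  have hsT_pos : 0 < sT N := (Nat.cast_pos.mpr hN).trans_le (hsT N)
  have : sZ N ≤ x * sT N := by nlinarith [hsZ N, hsT N]
  exact EReal.coe_le_coe_iff.mpr ((div_le_iff₀ hsT_pos).mpr this)

theorem le_sqrt_sum_sq {ι : Type*} [Fintype ι] (x : ι → ℝ) (i : ι) : x i ≤ √(∑ j, x j ^ 2) :=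
  (le_abs_self _).trans <| Real.abs_le_sqrt <|
    Finset.single_le_sum (f := fun j => x j ^ 2) (fun _ _ => sq_nonneg _) (Finset.mem_univ i)

section ExponentialMoment

variable {Ω : Type*} [MeasurableSpace Ω] {μ : Measure Ω} [IsFiniteMeasure μ]

theorem measureReal_ge_le_of_integral_exp_le {X : Ω → ℝ} {r D : ℝ} (hr : 0 ≤ r)
    (hint : Integrable (fun ω => Real.exp (r * X ω)) μ)
    (hD : ∫ ω, Real.exp (r * X ω) ∂μ ≤ D) (a : ℝ) :
    μ.real {ω | a ≤ X ω} ≤ D * Real.exp (-r * a) :=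
  calc μ.real {ω | a ≤ X ω} ≤ Real.exp (-r * a) * mgf X μ r := measure_ge_le_exp_mul_mgf a hr hint
    _ ≤ D * Real.exp (-r * a) := by
      rw [mul_comm]; exact mul_le_mul_of_nonneg_right hD (Real.exp_pos _).le

variable {X : ℕ → Ω → ℝ} {r D : ℝ}

theorem ae_eventually_lt_mul_of_integral_exp_le (hr : 0 < r)
    (hint : ∀ n, Integrable (fun ω => Real.exp (r * X n ω)) μ)
    (hD : ∀ n, ∫ ω, Real.exp (r * X n ω) ∂μ ≤ D) {ε : ℝ} (hε : 0 < ε) :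
    ∀ᵐ ω ∂μ, ∀ᶠ n in atTop, X n ω < ε * n := by
  have hgeom : Summable fun n : ℕ => D * Real.exp (-r * ε) ^ n :=
    (summable_geometric_of_lt_one (Real.exp_pos _).le
      (Real.exp_lt_one_iff.mpr (by nlinarith))).mul_left D
  have hsum : Summable fun n : ℕ => μ.real {ω | ε * n ≤ X n ω} := by
    refine hgeom.of_nonneg_of_le (fun _ => measureReal_nonneg) fun n => ?_
    calc μ.real {ω | ε * n ≤ X n ω} ≤ D * Real.exp (-r * (ε * n)) :=
          measureReal_ge_le_of_integral_exp_le hr.le (hint n) (hD n) _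
      _ = D * Real.exp (-r * ε) ^ n := by rw [← Real.exp_nat_mul]; ring_nf
  have hfin : ∑' n : ℕ, μ {ω | ε * n ≤ X n ω} ≠ ⊤ := by
    rw [tsum_congr fun n => (ofReal_measureReal (μ := μ) (s := {ω | ε * n ≤ X n ω})).symm,
      ← ENNReal.ofReal_tsum_of_nonneg (fun _ => measureReal_nonneg) hsum]
    exact ENNReal.ofReal_ne_top
  filter_upwards [ae_eventually_notMem hfin] with ω hω
  simpa using hω

theorem ae_forall_eventually_lt_mul_of_integral_exp_le (hr : 0 < r)
    (hint : ∀ n, Integrable (fun ω => Real.exp (r * X n ω)) μ)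
    (hD : ∀ n, ∫ ω, Real.exp (r * X n ω) ∂μ ≤ D) :
    ∀ᵐ ω ∂μ, ∀ ε > 0, ∀ᶠ n in atTop, X n ω < ε * n := by
  have h : ∀ k : ℕ, ∀ᵐ ω ∂μ, ∀ᶠ n in atTop, X n ω < 1 / (k + 1 : ℝ) * n := fun k =>
    ae_eventually_lt_mul_of_integral_exp_le hr hint hD Nat.one_div_pos_of_nat
  filter_upwards [ae_all_iff.mpr h] with ω hω ε hε
  obtain ⟨k, hk⟩ := exists_nat_one_div_lt hε
  filter_upwards [hω k] with n hn
  exact hn.trans_le (mul_le_mul_of_nonneg_right hk.le n.cast_nonneg)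

end ExponentialMoment

theorem stmt_6_general {Ω : Type*} [MeasurableSpace Ω] (μ : Measure Ω) [IsProbabilityMeasure μ]
    (L : ℕ)
    (T : ℕ → Ω → ℝ) (z : Fin L → ℕ → Ω → ℝ) (c : Fin L → ℝ)
    (hT1 : ∀ n, ∀ᵐ ω ∂μ, 1 ≤ T n ω)
    (Q : Fin L → ℕ → Ω → ℝ)
    (hQ0 : ∀ l ω, Q l 0 ω = 0)
    (hQrec : ∀ l n ω, Q l (n + 1) ω = max (Q l n ω + z l n ω - c l * T n ω) 0)
    (r D : ℝ) (hr : 0 < r)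
    (hint : ∀ n, Integrable (fun ω => Real.exp (r * Real.sqrt (∑ l, (Q l n ω) ^ 2))) μ)
    (hbound : ∀ n, ∫ ω, Real.exp (r * Real.sqrt (∑ l, (Q l n ω) ^ 2)) ∂μ ≤ D) :
    ∀ᵐ ω ∂μ, ∀ l : Fin L,
      limsup (fun N : ℕ =>
          (((∑ n ∈ Finset.range N, z l n ω) / (∑ n ∈ Finset.range N, T n ω) : ℝ) : EReal))
        atTop ≤ (c l : EReal) := by
  filter_upwards [ae_all_iff.mpr hT1,
    ae_forall_eventually_lt_mul_of_integral_exp_le (X := fun n ω => √(∑ l, Q l n ω ^ 2))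
      hr hint hbound] with ω hTω hQω l
  refine limsup_div_le_of_sum_le_add (q := fun N => Q l N ω) (fun N => ?_) (fun N => ?_)
    fun ε hε => ?_
  · simpa using Finset.card_nsmul_le_sum (Finset.range N) _ 1 fun n _ => hTω n
  · have hQ_step : ∀ n, Q l n ω + (z l n ω - c l * T n ω) ≤ Q l (n + 1) ω := fun n => by
      rw [hQrec, ← add_sub_assoc]; exact le_max_left _ _
    have := sum_range_le_sub_of_add_le hQ_step N
    simp only [hQ0, Finset.sum_sub_distrib, ← Finset.mul_sum, sub_zero] at this
    linarith
  · filter_upwards [hQω ε hε] with n hn using (le_sqrt_sum_sq (Q · n ω) l).trans_lt hn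

/-- Theorem 1 (feasibility): a uniform exponential moment bound on the virtual queue
vector forces all time-average resource constraints to hold almost surely. -/
theorem stmt_6 {Ω : Type*} [MeasurableSpace Ω] (μ : Measure Ω) [IsProbabilityMeasure μ]
    (L : ℕ) (hL : 0 < L)
    (T : ℕ → Ω → ℝ) (z : Fin L → ℕ → Ω → ℝ) (c : Fin L → ℝ)
    (hTmeas : ∀ n, Measurable (T n)) (hzmeas : ∀ l n, Measurable (z l n))
    (hT1 : ∀ n, ∀ᵐ ω ∂μ, 1 ≤ T n ω)
    (Q : Fin L → ℕ → Ω → ℝ)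
    (hQ0 : ∀ l ω, Q l 0 ω = 0)
    (hQrec : ∀ l n ω, Q l (n + 1) ω = max (Q l n ω + z l n ω - c l * T n ω) 0)
    (r D : ℝ) (hr : 0 < r) (hD : 0 < D)
    (hint : ∀ n, Integrable (fun ω => Real.exp (r * Real.sqrt (∑ l, (Q l n ω) ^ 2))) μ)
    (hbound : ∀ n, ∫ ω, Real.exp (r * Real.sqrt (∑ l, (Q l n ω) ^ 2)) ∂μ ≤ D) :
    ∀ᵐ ω ∂μ, ∀ l : Fin L,
      limsup (fun N : ℕ =>
          (((∑ n ∈ Finset.range N, z l n ω) / (∑ n ∈ Finset.range N, T n ω) : ℝ) : EReal))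
        atTop ≤ (c l : EReal) :=
  stmt_6_general μ L T z c hT1 Q hQ0 hQrec r D hr hint hbound
end

section
/- Let (Ω, F, P) be a probability space with filtration {H_n}_{n≥m} indexed by integers n ≥ m, let {F[n]}_{n≥m} be a real-valued process adapted to {H_n} with F[m] = 0, and let τ be a stopping time with respect to {H_n} taking values in {m+1, m+2, …} ∪ {∞}. Let d > 0 and let (b_n)_{n≥m+1} be a nondecreasing sequence of positive reals with d ≤ b_{m+1}. Define λ_n = d/(2e·b_n²) and ρ_n = 1 − d²/(4e·b_n²) for n ≥ m+1 (so each ρ_n ∈ (0,1) and λ_n is nonincreasing). Suppose for every n ≥ m: (i) |F[n+1] − F[n]| ≤ b_{n+1} almost surely; and (ii) almost surely on the event {τ > n}: F[n] ≥ 0 and E[F[n+1] − F[n] | H_n] ≤ −d. Then the process G[n] = exp(λ_{n∧τ} · F[n∧τ]) / Π_{i=m+1}^{n∧τ} ρ_i, for n ≥ m+1, is a supermartingale with respect to {H_n}_{n≥m+1}. -/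
/-!
On `{n < τ}` write `F[n+1] = F[n] + X` with `|X| ≤ b_{n+1}` and `E[X | H_n] ≤ -d`. Since
`λ_{n+1} b_{n+1} ≤ 1`, the bound `e^x ≤ 1 + x + x²` for `|x| ≤ 1` gives
`E[e^{λ_{n+1} X} | H_n] ≤ 1 + λ_{n+1}² b_{n+1}² - λ_{n+1} d ≤ ρ_{n+1}`, hence
`E[G[n+1] | H_n] ≤ e^{λ_{n+1} F[n]} / ∏_{i ≤ n} ρ_i ≤ G[n]`, the last step because `F[n] ≥ 0`
and `λ` is nonincreasing. On `{τ ≤ n}` the process is frozen, `G[n+1] = G[n]`. Integrability is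
automatic: every `F[n]` is bounded, by the bounded increments starting from `F[m] = 0`.
-/

open MeasureTheory Real

lemma ENat.toNat_min_natCast_succ (n : ℕ) (t : ℕ∞) :
    (min ((n + 1 : ℕ) : ℕ∞) t).toNat =
      if (n : ℕ∞) < t then n + 1 else (min (n : ℕ∞) t).toNat := by
  split_ifs with h
  · rw [min_eq_left (by simpa using Order.add_one_le_of_lt h), ENat.toNat_natCast]
  · rw [not_lt] at h
    rw [min_eq_right h, min_eq_right (h.trans (by simp))]

lemma ENat.toNat_min_natCast_of_le {n : ℕ} {t : ℕ∞} (h : (n : ℕ∞) ≤ t) :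
    (min (n : ℕ∞) t).toNat = n := by
  rw [min_eq_left h, ENat.toNat_natCast]

lemma div_two_exp_mul_sq_mul_le_one {d b : ℝ} (hd : 0 < d) (hdb : d ≤ b) :
    d / (2 * exp 1 * b ^ 2) * b ≤ 1 := by
  have hb : 0 < b := hd.trans_le hdb
  have he : 1 ≤ exp 1 := one_le_exp zero_le_one
  rw [div_mul_eq_mul_div, div_le_one (by positivity)]
  nlinarith

lemma one_sub_div_four_exp_mul_sq_pos {d b : ℝ} (hd : 0 < d) (hdb : d ≤ b) :
    0 < 1 - d ^ 2 / (4 * exp 1 * b ^ 2) := by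
  have hb : 0 < b := hd.trans_le hdb
  have he : 1 ≤ exp 1 := one_le_exp zero_le_one
  rw [sub_pos, div_lt_one (by positivity)]
  nlinarith

lemma one_add_sq_mul_sq_sub_mul_le {d b : ℝ} (hb : b ≠ 0) :
    1 + (d / (2 * exp 1 * b ^ 2)) ^ 2 * b ^ 2 - d / (2 * exp 1 * b ^ 2) * d ≤
      1 - d ^ 2 / (4 * exp 1 * b ^ 2) := by
  have he : 1 ≤ exp 1 := one_le_exp zero_le_one
  have key : (d / (2 * exp 1 * b ^ 2)) ^ 2 * b ^ 2 - d / (2 * exp 1 * b ^ 2) * d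
      + d ^ 2 / (4 * exp 1 * b ^ 2) = d ^ 2 / (4 * exp 1 * b ^ 2) * (1 / exp 1 - 1) := by
    field_simp
    ring
  have : d ^ 2 / (4 * exp 1 * b ^ 2) * (1 / exp 1 - 1) ≤ 0 :=
    mul_nonpos_of_nonneg_of_nonpos (by positivity)
      (sub_nonpos.2 ((div_le_one (exp_pos 1)).2 he))
  linarith

section

variable {Ω : Type*} {m m0 : MeasurableSpace Ω} {μ : Measure Ω}

lemma integrable_exp_mul_of_ae_abs_le [IsFiniteMeasure μ] {Y : Ω → ℝ} {c : ℝ}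
    (hY : AEStronglyMeasurable Y μ) (hYc : ∀ᵐ ω ∂μ, |Y ω| ≤ c) (t : ℝ) :
    Integrable (fun ω => exp (t * Y ω)) μ := by
  refine Integrable.of_bound (continuous_exp.comp_aestronglyMeasurable (hY.const_mul t))
    (exp (|t| * c)) ?_
  filter_upwards [hYc] with ω h
  rw [norm_of_nonneg (exp_pos _).le, exp_le_exp]
  calc t * Y ω ≤ |t * Y ω| := le_abs_self _
    _ = |t| * |Y ω| := abs_mul _ _
    _ ≤ |t| * c := by gcongr

lemma condExp_const_add_mul [IsFiniteMeasure μ] (hm : m ≤ m0) {X : Ω → ℝ} (hX : Integrable X μ)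
    (a s : ℝ) : μ[fun ω => a + s * X ω | m] =ᵐ[μ] fun ω => a + s * μ[X | m] ω := by
  change μ[(fun _ => a) + s • X | m] =ᵐ[μ] _
  have hsum := condExp_add (integrable_const a) (hX.smul s) m
  rw [condExp_const hm a] at hsum
  filter_upwards [hsum, condExp_smul s X m] with ω h hs
  simpa [hs] using h

theorem condExp_exp_mul_le [IsFiniteMeasure μ] (hm : m ≤ m0) {X : Ω → ℝ} {b s : ℝ}
    (hX : AEStronglyMeasurable X μ) (hXb : ∀ᵐ ω ∂μ, |X ω| ≤ b) (hsb : |s| * b ≤ 1) :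
    μ[fun ω => exp (s * X ω) | m] ≤ᵐ[μ] fun ω => 1 + s ^ 2 * b ^ 2 + s * μ[X | m] ω := by
  have hXint : Integrable X μ := Integrable.of_bound hX b (by simpa using hXb)
  have hpointwise : ∀ᵐ ω ∂μ, exp (s * X ω) ≤ 1 + s ^ 2 * b ^ 2 + s * X ω := by
    filter_upwards [hXb] with ω h
    have hsX : |s * X ω| ≤ |s| * b := by rw [abs_mul]; gcongr
    have htaylor := (abs_le.1 (abs_exp_sub_one_sub_id_le (hsX.trans hsb))).2
    have hsq : (s * X ω) ^ 2 ≤ s ^ 2 * b ^ 2 := by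
      calc (s * X ω) ^ 2 = |s * X ω| ^ 2 := (sq_abs _).symm
        _ ≤ (|s| * b) ^ 2 := pow_le_pow_left₀ (abs_nonneg _) hsX 2
        _ = s ^ 2 * b ^ 2 := by rw [mul_pow, sq_abs]
    linarith
  exact (condExp_mono (integrable_exp_mul_of_ae_abs_le hX hXb s)
    ((integrable_const _).add (hXint.const_mul s)) hpointwise).trans_eq
      (condExp_const_add_mul hm hXint _ s)

lemma condExp_div_const (f : Ω → ℝ) (c : ℝ) :
    μ[fun ω => f ω / c | m] =ᵐ[μ] fun ω => μ[f | m] ω / c := by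
  have hsmul : (fun ω => f ω / c) = c⁻¹ • f := by ext; simp [div_eq_inv_mul]
  filter_upwards [condExp_smul c⁻¹ f m] with ω h
  rw [hsmul, h]
  simp [div_eq_inv_mul]

theorem condExp_exp_mul_div_le_of_drift [IsFiniteMeasure μ] (hm : m ≤ m0) {Y Z : Ω → ℝ}
    {b c d s t ρ P : ℝ} (hY : StronglyMeasurable[m] Y) (hYc : ∀ᵐ ω ∂μ, |Y ω| ≤ c)
    (hZ : AEStronglyMeasurable Z μ) (hZY : ∀ᵐ ω ∂μ, |Z ω - Y ω| ≤ b) (hs : 0 ≤ s)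
    (hsb : s * b ≤ 1) (hst : s ≤ t) (hρ : 0 < ρ) (hρd : 1 + s ^ 2 * b ^ 2 - s * d ≤ ρ)
    (hP : 0 < P) :
    ∀ᵐ ω ∂μ, 0 ≤ Y ω → μ[fun ω => Z ω - Y ω | m] ω ≤ -d →
      μ[fun ω => exp (s * Z ω) / (P * ρ) | m] ω ≤ exp (t * Y ω) / P := by
  have hX : AEStronglyMeasurable (fun ω => Z ω - Y ω) μ :=
    hZ.sub (hY.mono hm).aestronglyMeasurable
  have hZc : ∀ᵐ ω ∂μ, |Z ω| ≤ c + b := by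
    filter_upwards [hYc, hZY] with ω h1 h2
    linarith [abs_sub_abs_le_abs_sub (Z ω) (Y ω)]
  have hfactor : (fun ω => exp (s * Z ω)) =
      (fun ω => exp (s * Y ω)) * fun ω => exp (s * (Z ω - Y ω)) := by
    ext ω
    rw [Pi.mul_apply, ← exp_add]
    ring_nf
  have hpull : μ[fun ω => exp (s * Z ω) | m] =ᵐ[μ]
      (fun ω => exp (s * Y ω)) * μ[fun ω => exp (s * (Z ω - Y ω)) | m] := by
    rw [hfactor]
    exact condExp_mul_of_stronglyMeasurable_left (continuous_exp.comp_stronglyMeasurable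
      (hY.const_mul s)) (hfactor ▸ integrable_exp_mul_of_ae_abs_le hZ hZc s)
      (integrable_exp_mul_of_ae_abs_le hX hZY s)
  filter_upwards [condExp_div_const (fun ω => exp (s * Z ω)) (P * ρ), hpull,
    condExp_exp_mul_le hm hX hZY (by rwa [abs_of_nonneg hs])] with ω hdiv hpullω hmgf hY0 hdrift
  rw [hdiv, hpullω, Pi.mul_apply]
  have hdrift' : s * μ[fun ω => Z ω - Y ω | m] ω ≤ s * -d := mul_le_mul_of_nonneg_left hdrift hs
  calc exp (s * Y ω) * μ[fun ω => exp (s * (Z ω - Y ω)) | m] ω / (P * ρ)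
      ≤ exp (s * Y ω) * ρ / (P * ρ) := by gcongr; linarith
    _ = exp (s * Y ω) / P := by field_simp
    _ ≤ exp (t * Y ω) / P := by gcongr

theorem condExp_piecewise_le (hm : m ≤ m0) [SigmaFinite (μ.trim hm)] {s : Set Ω}
    [DecidablePred (· ∈ s)] (hs : MeasurableSet[m] s) {f g : Ω → ℝ} (hf : Integrable f μ)
    (hg : StronglyMeasurable[m] g) (hgi : Integrable g μ)
    (hfg : ∀ᵐ ω ∂μ, ω ∈ s → μ[f | m] ω ≤ g ω) :
    μ[s.piecewise f g | m] ≤ᵐ[μ] g := by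
  have hg' : μ[sᶜ.indicator g | m] = sᶜ.indicator g :=
    condExp_of_stronglyMeasurable hm (hg.indicator hs.compl) (hgi.indicator (hm _ hs.compl))
  rw [← Set.indicator_add_compl_eq_piecewise]
  filter_upwards [condExp_add (hf.indicator (hm _ hs)) (hgi.indicator (hm _ hs.compl)) m,
    condExp_indicator hf hs, hfg] with ω hadd hind hω
  rw [hadd, Pi.add_apply, hg', hind]
  by_cases h : ω ∈ s
  · simp [h, hω h]
  · simp [h]

/-- Supermartingale property from time `N` on, in one-step form (as in
`MeasureTheory.supermartingale_nat`). -/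
def IsSupermartingaleFrom (μ : Measure Ω) (ℱ : Filtration ℕ m0) (N : ℕ) (G : ℕ → Ω → ℝ) :
    Prop :=
  ∀ n, N ≤ n → Integrable (G n) μ ∧ StronglyMeasurable[ℱ n] (G n) ∧ μ[G (n + 1) | ℱ n] ≤ᵐ[μ] G n

theorem isSupermartingaleFrom_of_stopped [IsFiniteMeasure μ] {ℱ : Filtration ℕ m0} {N : ℕ}
    {τ : Ω → ℕ∞} {H G : ℕ → Ω → ℝ} (hτ : IsStoppingTime ℱ τ) (hτN : ∀ ω, (N : ℕ∞) ≤ τ ω)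
    (hH : ∀ n, N ≤ n → Integrable (H n) μ ∧ StronglyMeasurable[ℱ n] (H n))
    (hHτ : ∀ n, N ≤ n → ∀ᵐ ω ∂μ, (n : ℕ∞) < τ ω → μ[H (n + 1) | ℱ n] ω ≤ H n ω)
    (hG : ∀ n ω, G n ω = H (min (n : ℕ∞) (τ ω)).toNat ω) :
    IsSupermartingaleFrom μ ℱ N G := by
  have hS : ∀ n : ℕ, MeasurableSet[ℱ n] {ω | (n : ℕ∞) < τ ω} := hτ.measurableSet_gt
  have hrec : ∀ n, G (n + 1) = {ω | (n : ℕ∞) < τ ω}.piecewise (H (n + 1)) (G n) := by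
    intro n
    ext ω
    simp only [Set.piecewise, Set.mem_ofPred_eq, hG, ENat.toNat_min_natCast_succ]
    split_ifs <;> rfl
  have hGH : ∀ (n : ℕ) ω, (n : ℕ∞) ≤ τ ω → G n ω = H n ω := fun n ω h => by
    rw [hG, ENat.toNat_min_natCast_of_le h]
  have hGN : ∀ n, N ≤ n → Integrable (G n) μ ∧ StronglyMeasurable[ℱ n] (G n) := by
    intro n hn
    induction n, hn using Nat.le_induction with
    | base =>
      rw [show G N = H N from funext fun ω => hGH N ω (hτN ω)]
      exact hH N le_rfl
    | succ n hn ih =>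
      rw [hrec n]
      exact ⟨Integrable.piecewise (ℱ.le n _ (hS n)) (hH (n + 1) (by omega)).1.integrableOn
        ih.1.integrableOn, StronglyMeasurable.piecewise (ℱ.mono n.le_succ _ (hS n))
        (hH (n + 1) (by omega)).2 (ih.2.mono (ℱ.mono n.le_succ))⟩
  intro n hn
  refine ⟨(hGN n hn).1, (hGN n hn).2, ?_⟩
  rw [hrec n]
  refine condExp_piecewise_le (ℱ.le n) (hS n) (hH (n + 1) (by omega)).1 (hGN n hn).2
    (hGN n hn).1 ?_
  filter_upwards [hHτ n hn] with ω h hω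
  rw [hGH n ω hω.le]
  exact h hω

lemma exists_ae_abs_le_of_abs_sub_le {F : ℕ → Ω → ℝ} {b : ℕ → ℝ} {N : ℕ}
    (hN : ∃ C, ∀ᵐ ω ∂μ, |F N ω| ≤ C)
    (hinc : ∀ n, N ≤ n → ∀ᵐ ω ∂μ, |F (n + 1) ω - F n ω| ≤ b (n + 1)) :
    ∀ n, N ≤ n → ∃ C, ∀ᵐ ω ∂μ, |F n ω| ≤ C := by
  intro n hn
  induction n, hn using Nat.le_induction with
  | base => exact hN
  | succ n hn ih =>
    obtain ⟨C, hC⟩ := ih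
    refine ⟨C + b (n + 1), ?_⟩
    filter_upwards [hC, hinc n hn] with ω h1 h2
    linarith [abs_sub_abs_le_abs_sub (F (n + 1) ω) (F n ω)]

end

theorem stmt_13_general {Ω : Type*} {m0 : MeasurableSpace Ω} (μ : Measure Ω) [IsProbabilityMeasure μ]
    (ℱ : Filtration ℕ m0) (m : ℕ) (F : ℕ → Ω → ℝ)
    (hFadapted : ∀ n, m ≤ n → StronglyMeasurable[ℱ n] (F n))
    (hFm : ∀ ω, F m ω = 0)
    (τ : Ω → ℕ∞)
    (hτstop : ∀ n : ℕ, MeasurableSet[ℱ n] {ω | τ ω ≤ (n : ℕ∞)})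
    (hτval : ∀ ω, ((m : ℕ∞) + 1) ≤ τ ω)
    (d : ℝ) (hd : 0 < d)
    (b : ℕ → ℝ)
    (hbmono : ∀ i j, m + 1 ≤ i → i ≤ j → b i ≤ b j)
    (hdb : d ≤ b (m + 1))
    (lam ρ : ℕ → ℝ)
    (hlam : ∀ n, m + 1 ≤ n → lam n = d / (2 * Real.exp 1 * (b n) ^ 2))
    (hρ : ∀ n, m + 1 ≤ n → ρ n = 1 - d ^ 2 / (4 * Real.exp 1 * (b n) ^ 2))
    (hinc : ∀ n, m ≤ n → ∀ᵐ ω ∂μ, |F (n + 1) ω - F n ω| ≤ b (n + 1))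
    (hdrift : ∀ n, m ≤ n → ∀ᵐ ω ∂μ, ((n : ℕ∞) < τ ω) →
      0 ≤ F n ω ∧ (μ[fun ω' => F (n + 1) ω' - F n ω' | ℱ n]) ω ≤ -d)
    (G : ℕ → Ω → ℝ)
    (hG : ∀ n ω, G n ω =
      Real.exp (lam ((min (n : ℕ∞) (τ ω)).toNat) * F ((min (n : ℕ∞) (τ ω)).toNat) ω) /
        ∏ i ∈ Finset.Icc (m + 1) ((min (n : ℕ∞) (τ ω)).toNat), ρ i) :
    ∀ n, m + 1 ≤ n →
      Integrable (G n) μ ∧ StronglyMeasurable[ℱ n] (G n) ∧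
        (μ[G (n + 1) | ℱ n]) ≤ᵐ[μ] G n := by
  have hdb' : ∀ n, m + 1 ≤ n → d ≤ b n := fun n hn => hdb.trans (hbmono _ _ le_rfl hn)
  have hρpos : ∀ n, m + 1 ≤ n → 0 < ρ n := fun n hn => by
    rw [hρ n hn]; exact one_sub_div_four_exp_mul_sq_pos hd (hdb' n hn)
  have hFbdd := exists_ae_abs_le_of_abs_sub_le (μ := μ) ⟨0, by simp [hFm]⟩ hinc
  refine isSupermartingaleFrom_of_stopped
    (H := fun k ω => exp (lam k * F k ω) / ∏ i ∈ Finset.Icc (m + 1) k, ρ i)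
    hτstop (by exact_mod_cast hτval) (fun k hk => ⟨?_, ?_⟩) (fun n hn => ?_) hG
  · obtain ⟨C, hC⟩ := hFbdd k (by omega)
    exact (integrable_exp_mul_of_ae_abs_le
      ((hFadapted k (by omega)).mono (ℱ.le k)).aestronglyMeasurable hC _).div_const _
  · exact (((hFadapted k (by omega)).measurable.const_mul _).exp.div_const _).stronglyMeasurable
  · obtain ⟨C, hC⟩ := hFbdd n (by omega)
    have hn1 : m + 1 ≤ n + 1 := by omega
    have hb0 : 0 < b n := hd.trans_le (hdb' n hn)
    have hb : b n ≤ b (n + 1) := hbmono _ _ hn n.le_succ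
    have hstep := condExp_exp_mul_div_le_of_drift (ℱ.le n) (hFadapted n (by omega)) hC
      ((hFadapted (n + 1) (by omega)).mono (ℱ.le _)).aestronglyMeasurable (hinc n (by omega))
      (s := lam (n + 1)) (t := lam n) (ρ := ρ (n + 1)) (d := d)
      (P := ∏ i ∈ Finset.Icc (m + 1) n, ρ i)
      (by rw [hlam _ hn1]; positivity)
      (by rw [hlam _ hn1]; exact div_two_exp_mul_sq_mul_le_one hd (hdb' _ hn1))
      (by rw [hlam _ hn, hlam _ hn1]; gcongr)
      (hρpos _ hn1)
      (by rw [hlam _ hn1, hρ _ hn1]; exact one_add_sq_mul_sq_sub_mul_le (hb0.trans_le hb).ne')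
      (Finset.prod_pos fun i hi => hρpos i (Finset.mem_Icc.1 hi).1)
    filter_upwards [hstep, hdrift n (by omega)] with ω hω hdriftω hτω
    rw [Finset.prod_Icc_succ_top (by omega)]
    exact hω (hdriftω hτω).1 (hdriftω hτω).2

/-- Lemma 8 (exponential supermartingale), abstract form: an adapted process with
uniformly negative conditional drift −d and increments bounded by a nondecreasing
sequence b_n, killed at a stopping time τ before which it stays nonnegative, yields a
supermartingale after exponential reweighting with time-varying exponents λ_n = d/(2e b_n²)
and weights ρ_n = 1 − d²/(4e b_n²). -/
theorem stmt_13 {Ω : Type*} {m0 : MeasurableSpace Ω} (μ : Measure Ω) [IsProbabilityMeasure μ]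
    (ℱ : Filtration ℕ m0) (m : ℕ) (F : ℕ → Ω → ℝ)
    (hFadapted : ∀ n, m ≤ n → StronglyMeasurable[ℱ n] (F n))
    (hFm : ∀ ω, F m ω = 0)
    (τ : Ω → ℕ∞)
    (hτstop : ∀ n : ℕ, MeasurableSet[ℱ n] {ω | τ ω ≤ (n : ℕ∞)})
    (hτval : ∀ ω, ((m : ℕ∞) + 1) ≤ τ ω)
    (d : ℝ) (hd : 0 < d)
    (b : ℕ → ℝ) (hbpos : ∀ n, m + 1 ≤ n → 0 < b n)
    (hbmono : ∀ i j, m + 1 ≤ i → i ≤ j → b i ≤ b j)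
    (hdb : d ≤ b (m + 1))
    (lam ρ : ℕ → ℝ)
    (hlam : ∀ n, m + 1 ≤ n → lam n = d / (2 * Real.exp 1 * (b n) ^ 2))
    (hρ : ∀ n, m + 1 ≤ n → ρ n = 1 - d ^ 2 / (4 * Real.exp 1 * (b n) ^ 2))
    (hinc : ∀ n, m ≤ n → ∀ᵐ ω ∂μ, |F (n + 1) ω - F n ω| ≤ b (n + 1))
    (hdrift : ∀ n, m ≤ n → ∀ᵐ ω ∂μ, ((n : ℕ∞) < τ ω) →
      0 ≤ F n ω ∧ (μ[fun ω' => F (n + 1) ω' - F n ω' | ℱ n]) ω ≤ -d)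
    (G : ℕ → Ω → ℝ)
    (hG : ∀ n ω, G n ω =
      Real.exp (lam ((min (n : ℕ∞) (τ ω)).toNat) * F ((min (n : ℕ∞) (τ ω)).toNat) ω) /
        ∏ i ∈ Finset.Icc (m + 1) ((min (n : ℕ∞) (τ ω)).toNat), ρ i) :
    ∀ n, m + 1 ≤ n →
      Integrable (G n) μ ∧ StronglyMeasurable[ℱ n] (G n) ∧
        (μ[G (n + 1) | ℱ n]) ≤ᵐ[μ] G n :=
  stmt_13_general μ ℱ m F hFadapted hFm τ hτstop hτval d hd b hbmono hdb lam ρ hlam hρ hinc hdrift G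
    hG
end

section
/- For every β ∈ (0, 1/5] and every C₁ > 0 there exists a constant C > 0 (depending only on β and C₁) such that for all integers n ≥ 1: Σ_{m=1}^∞ (m+1)³ · exp( −((n+m+1)^{1−β} − (n+2)^{1−β}) / (C₁·(1−β)) ) ≤ C·(n+2)^{5β}. -/
/-!
Bernoulli's inequality (concavity of `t ↦ t ^ (1 - β)`) bounds the exponent of the `m`-th term
below by `m / (C₁ (x + m) ^ β)`, where `x = n + 2`, and subadditivity `(x + m) ^ β ≤ x ^ β + m ^ β`
turns this into `min (m / (2 C₁ x ^ β)) (m ^ (1 - β) / (2 C₁))`. Each term is therefore at most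
`(m + 2)³ rᵐ + (m + 2)³ exp (-m ^ (1 - β) / (2 C₁))` with `r = exp (-1 / (2 C₁ x ^ β))`. The second
series does not depend on `n`; since `(m + 2)³ ≤ 12 (m + 3).choose 3` and
`∑ (m + 3).choose 3 rᵐ = (1 - r)⁻⁴`, the first is at most `12 (1 - r)⁻⁴ ≤ 12 (1 + 2 C₁ x ^ β)⁴`,
which is `O(x ^ (4 β))`.
-/

open Real Filter Asymptotics

lemma add_two_pow_three_le_choose (m : ℕ) : ((m : ℝ) + 2) ^ 3 ≤ 12 * ((m + 3).choose 3 : ℕ) := by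
  have h : ((m + 3).choose 3 : ℝ) * 6 = (m + 3) * (m + 2) * (m + 1) := by
    rw [Nat.cast_choose ℝ (by omega : 3 ≤ m + 3)]
    simp [Nat.factorial]
    field_simp
    ring
  have hm : (0 : ℝ) ≤ m := m.cast_nonneg
  nlinarith [mul_nonneg (by linarith : (0 : ℝ) ≤ m + 2)
    (by nlinarith : (0 : ℝ) ≤ m ^ 2 + 4 * m + 2)]

lemma summable_add_two_pow_three_mul_geometric {r : ℝ} (hr₀ : 0 ≤ r) (hr₁ : r < 1) :
    Summable fun m : ℕ => ((m : ℝ) + 2) ^ 3 * r ^ m := by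
  have hr : ‖r‖ < 1 := by rwa [norm_of_nonneg hr₀]
  have hchoose : Summable fun m : ℕ => 12 * (((m + 3).choose 3 : ℕ) * r ^ m) :=
    (summable_choose_mul_geometric_of_norm_lt_one 3 hr).mul_left 12
  refine hchoose.of_nonneg_of_le (fun m => by positivity) fun m => ?_
  rw [← mul_assoc]
  exact mul_le_mul_of_nonneg_right (add_two_pow_three_le_choose m) (pow_nonneg hr₀ m)

lemma tsum_add_two_pow_three_mul_geometric_le {r : ℝ} (hr₀ : 0 ≤ r) (hr₁ : r < 1) :
    ∑' m : ℕ, ((m : ℝ) + 2) ^ 3 * r ^ m ≤ 12 / (1 - r) ^ 4 := by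
  have hr : ‖r‖ < 1 := by rwa [norm_of_nonneg hr₀]
  calc ∑' m : ℕ, ((m : ℝ) + 2) ^ 3 * r ^ m
      ≤ ∑' m : ℕ, 12 * (((m + 3).choose 3 : ℕ) * r ^ m) :=
        Summable.tsum_le_tsum
          (fun m => by
            rw [← mul_assoc]
            exact mul_le_mul_of_nonneg_right (add_two_pow_three_le_choose m) (pow_nonneg hr₀ m))
          (summable_add_two_pow_three_mul_geometric hr₀ hr₁)
          ((summable_choose_mul_geometric_of_norm_lt_one 3 hr).mul_left 12)
    _ = 12 / (1 - r) ^ 4 := by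
        rw [tsum_mul_left, tsum_choose_mul_geometric_of_norm_lt_one 3 hr]
        ring

lemma inv_one_sub_exp_neg_le {t : ℝ} (ht : 0 < t) : (1 - exp (-t))⁻¹ ≤ 1 + t⁻¹ := by
  have h : exp (-t) ≤ (1 + t)⁻¹ := by
    rw [exp_neg]
    exact inv_anti₀ (by positivity) (by linarith [add_one_le_exp t])
  have h' : t / (1 + t) ≤ 1 - exp (-t) := by
    have e : t / (1 + t) = 1 - (1 + t)⁻¹ := by field_simp; ring
    linarith
  calc (1 - exp (-t))⁻¹ ≤ (t / (1 + t))⁻¹ := inv_anti₀ (by positivity) h'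
    _ = 1 + t⁻¹ := by field_simp; ring

lemma rpow_le_rpow_add_mul_rpow_sub_one_mul_sub {a b q : ℝ} (ha : 0 ≤ a) (hb : 0 < b)
    (hq₀ : 0 ≤ q) (hq₁ : q ≤ 1) : a ^ q ≤ b ^ q + q * b ^ (q - 1) * (a - b) := by
  have h := rpow_one_add_le_one_add_mul_self (s := a / b - 1) (by linarith [div_nonneg ha hb.le])
    hq₀ hq₁
  rw [add_sub_cancel, div_rpow ha hb.le, div_le_iff₀ (rpow_pos_of_pos hb q)] at h
  calc a ^ q ≤ (1 + q * (a / b - 1)) * b ^ q := h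
    _ = b ^ q + q * (b ^ q / b) * (a - b) := by field_simp
    _ = _ := by rw [rpow_sub_one hb.ne']

lemma min_le_rpow_add_sub_rpow_div {x m β C : ℝ} (hx : 0 < x) (hm : 0 ≤ m) (hβ₀ : 0 < β)
    (hβ₁ : β < 1) (hC : 0 < C) :
    min (m / (2 * C * x ^ β)) (m ^ (1 - β) / (2 * C)) ≤
      ((x + m) ^ (1 - β) - x ^ (1 - β)) / (C * (1 - β)) := by
  set y := (x + m) ^ β
  have hy : 0 < y := rpow_pos_of_pos (by linarith) β
  have hsub : y ≤ x ^ β + m ^ β := rpow_add_le_add_rpow hx.le hm hβ₀.le hβ₁.le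
  have hincrement : (1 - β) * (m / y) ≤ (x + m) ^ (1 - β) - x ^ (1 - β) := by
    have htangent := rpow_le_rpow_add_mul_rpow_sub_one_mul_sub hx.le (by linarith : 0 < x + m)
      (by linarith : 0 ≤ 1 - β) (by linarith : 1 - β ≤ 1)
    rw [show 1 - β - 1 = -β by ring, rpow_neg (by linarith)] at htangent
    have e : (1 - β) * y⁻¹ * (x - (x + m)) = -((1 - β) * (m / y)) := by ring
    linarith
  have hlow : m / (C * y) ≤ ((x + m) ^ (1 - β) - x ^ (1 - β)) / (C * (1 - β)) := by
    rw [le_div_iff₀ (by nlinarith)]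
    calc m / (C * y) * (C * (1 - β)) = (1 - β) * (m / y) := by field_simp
      _ ≤ _ := hincrement
  rcases le_total (x ^ β) (m ^ β) with h | h
  · refine (min_le_right _ _).trans (le_trans ?_ hlow)
    rw [rpow_sub' hm (by linarith), rpow_one, div_div, mul_comm (m ^ β)]
    exact div_le_div_of_nonneg_left hm (by positivity) (by nlinarith)
  · refine (min_le_left _ _).trans (le_trans ?_ hlow)
    exact div_le_div_of_nonneg_left hm (by positivity) (by nlinarith)

lemma exp_neg_le_add_of_min_le {u a b : ℝ} (h : min a b ≤ u) : exp (-u) ≤ exp (-a) + exp (-b) := by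
  rcases min_le_iff.mp h with h | h
  · linarith [exp_le_exp.mpr (neg_le_neg h), exp_pos (-b)]
  · linarith [exp_le_exp.mpr (neg_le_neg h), exp_pos (-a)]

lemma summable_rpow_mul_exp_neg_mul_rpow (s : ℝ) {c p : ℝ} (hc : 0 < c) (hp : 0 < p) :
    Summable fun m : ℕ => (m : ℝ) ^ s * exp (-c * (m : ℝ) ^ p) := by
  have hexp :
      (fun m : ℕ => exp (-c * (m : ℝ) ^ p)) =O[atTop] fun m : ℕ => (m : ℝ) ^ (-(s + 2)) := by
    refine ((isLittleO_exp_neg_mul_rpow_atTop hc (-(s + 2) / p)).comp_tendsto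
      ((tendsto_rpow_atTop hp).comp tendsto_natCast_atTop_atTop)).isBigO.congr'
      (Eventually.of_forall fun m => rfl) (Eventually.of_forall fun m => ?_)
    simp only [Function.comp_apply]
    rw [← rpow_mul m.cast_nonneg]
    field_simp
  exact summable_of_isBigO_nat' (summable_nat_rpow.mpr (by norm_num))
    ((isBigO_refl _ atTop).mul_atTop_rpow_natCast_of_isBigO_rpow _ _ (-2) hexp (by linarith))

lemma summable_add_two_pow_three_mul_exp_neg_mul_rpow {c p : ℝ} (hc : 0 < c) (hp : 0 < p) :
    Summable fun m : ℕ => ((m : ℝ) + 2) ^ 3 * exp (-c * (m : ℝ) ^ p) := by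
  refine (((summable_rpow_mul_exp_neg_mul_rpow 3 hc hp).add
    (summable_rpow_mul_exp_neg_mul_rpow 0 hc hp)).mul_left 32).of_nonneg_of_le
    (fun m => by positivity) fun m => ?_
  have hm : (0 : ℝ) ≤ m := m.cast_nonneg
  have hcube : ((m : ℝ) + 2) ^ 3 ≤ 32 * ((m : ℝ) ^ (3 : ℝ) + (m : ℝ) ^ (0 : ℝ)) := by
    rw [rpow_zero, rpow_ofNat]
    nlinarith [sq_nonneg ((m : ℝ) - 1), mul_nonneg hm (sq_nonneg ((m : ℝ) - 1))]
  calc ((m : ℝ) + 2) ^ 3 * exp (-c * (m : ℝ) ^ p)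
      ≤ 32 * ((m : ℝ) ^ (3 : ℝ) + (m : ℝ) ^ (0 : ℝ)) * exp (-c * (m : ℝ) ^ p) := by gcongr
    _ = _ := by ring

lemma tsum_add_two_pow_three_mul_exp_neg_pow_le {t : ℝ} (ht : 0 < t) :
    ∑' m : ℕ, ((m : ℝ) + 2) ^ 3 * exp (-t) ^ m ≤ 12 * (1 + t⁻¹) ^ 4 := by
  have hr : exp (-t) < 1 := exp_lt_one_iff.mpr (by linarith)
  calc ∑' m : ℕ, ((m : ℝ) + 2) ^ 3 * exp (-t) ^ m ≤ 12 / (1 - exp (-t)) ^ 4 :=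
        tsum_add_two_pow_three_mul_geometric_le (exp_pos _).le hr
    _ = 12 * ((1 - exp (-t))⁻¹) ^ 4 := by rw [inv_pow, div_eq_mul_inv]
    _ ≤ 12 * (1 + t⁻¹) ^ 4 := by
        gcongr
        exact inv_one_sub_exp_neg_le ht

lemma exp_neg_rpow_increment_le {x β C : ℝ} (hx : 0 < x) (hβ₀ : 0 < β) (hβ₁ : β < 1)
    (hC : 0 < C) (m : ℕ) :
    exp (-(((x + m) ^ (1 - β) - x ^ (1 - β)) / (C * (1 - β)))) ≤
      exp (-(2 * C * x ^ β)⁻¹) ^ m + exp (-(2 * C)⁻¹ * (m : ℝ) ^ (1 - β)) := by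
  convert exp_neg_le_add_of_min_le
    (min_le_rpow_add_sub_rpow_div hx m.cast_nonneg hβ₀ hβ₁ hC) using 2
  · rw [← exp_nat_mul]
    ring_nf
  · ring_nf

lemma tsum_add_two_pow_three_mul_exp_neg_rpow_increment_le {x β C : ℝ} (hx : 0 < x)
    (hβ₀ : 0 < β) (hβ₁ : β < 1) (hC : 0 < C) :
    ∑' m : ℕ, ((m : ℝ) + 2) ^ 3 * exp (-(((x + m) ^ (1 - β) - x ^ (1 - β)) / (C * (1 - β)))) ≤
      12 * (1 + 2 * C * x ^ β) ^ 4 +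
        ∑' m : ℕ, ((m : ℝ) + 2) ^ 3 * exp (-(2 * C)⁻¹ * (m : ℝ) ^ (1 - β)) := by
  have ht : 0 < (2 * C * x ^ β)⁻¹ := by positivity
  have hgeom := summable_add_two_pow_three_mul_geometric (exp_pos (-(2 * C * x ^ β)⁻¹)).le
    (exp_lt_one_iff.mpr (neg_lt_zero.mpr ht))
  have htail := summable_add_two_pow_three_mul_exp_neg_mul_rpow
    (inv_pos.mpr (by positivity : 0 < 2 * C)) (by linarith : 0 < 1 - β)
  have hterm : ∀ m : ℕ,
      ((m : ℝ) + 2) ^ 3 * exp (-(((x + m) ^ (1 - β) - x ^ (1 - β)) / (C * (1 - β)))) ≤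
        ((m : ℝ) + 2) ^ 3 * exp (-(2 * C * x ^ β)⁻¹) ^ m +
          ((m : ℝ) + 2) ^ 3 * exp (-(2 * C)⁻¹ * (m : ℝ) ^ (1 - β)) := fun m => by
    rw [← mul_add]
    exact mul_le_mul_of_nonneg_left (exp_neg_rpow_increment_le hx hβ₀ hβ₁ hC m) (by positivity)
  calc _ ≤ ∑' m : ℕ, (((m : ℝ) + 2) ^ 3 * exp (-(2 * C * x ^ β)⁻¹) ^ m +
          ((m : ℝ) + 2) ^ 3 * exp (-(2 * C)⁻¹ * (m : ℝ) ^ (1 - β))) :=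
        Summable.tsum_le_tsum hterm
          ((hgeom.add htail).of_nonneg_of_le (fun m => by positivity) hterm) (hgeom.add htail)
    _ = _ := hgeom.tsum_add htail
    _ ≤ _ := by
        gcongr
        simpa using tsum_add_two_pow_three_mul_exp_neg_pow_le ht

/-- Appendix asymptotic estimate: for β ∈ (0,1/5] and C₁ > 0 there is C > 0 with
Σ_{m≥1} (m+1)³ exp(−((n+m+1)^{1−β} − (n+2)^{1−β})/(C₁(1−β))) ≤ C(n+2)^{5β} for all n ≥ 1.
(The series over integers m ≥ 1 is reindexed by m ↦ m+1 over ℕ.) -/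
theorem stmt_15 (β C₁ : ℝ) (hβ0 : 0 < β) (hβ1 : β ≤ 1 / 5) (hC₁ : 0 < C₁) :
    ∃ C : ℝ, 0 < C ∧ ∀ n : ℕ, 1 ≤ n →
      (∑' m : ℕ, ((m : ℝ) + 2) ^ 3 *
          Real.exp (-((((n : ℝ) + (m : ℝ) + 2) ^ (1 - β) - ((n : ℝ) + 2) ^ (1 - β)) /
            (C₁ * (1 - β))))) ≤
        C * ((n : ℝ) + 2) ^ (5 * β) := by
  set T := ∑' m : ℕ, ((m : ℝ) + 2) ^ 3 * exp (-(2 * C₁)⁻¹ * (m : ℝ) ^ (1 - β))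
  have hT : 0 ≤ T := tsum_nonneg fun m => by positivity
  refine ⟨12 * (1 + 2 * C₁) ^ 4 + T, by positivity, fun n _ => ?_⟩
  set x : ℝ := (n : ℝ) + 2
  have hx : 1 ≤ x := by simp only [x]; linarith [n.cast_nonneg (α := ℝ)]
  have hpower : (1 + 2 * C₁ * x ^ β) ^ 4 ≤ (1 + 2 * C₁) ^ 4 * x ^ (5 * β) :=
    calc (1 + 2 * C₁ * x ^ β) ^ 4 ≤ ((1 + 2 * C₁) * x ^ β) ^ 4 := by
          gcongr; nlinarith [one_le_rpow hx hβ0.le]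
      _ = (1 + 2 * C₁) ^ 4 * x ^ (4 * β) := by
          rw [mul_pow, ← rpow_mul_natCast (by linarith)]; ring_nf
      _ ≤ (1 + 2 * C₁) ^ 4 * x ^ (5 * β) := by gcongr; linarith
  calc _ = ∑' m : ℕ, ((m : ℝ) + 2) ^ 3 *
          exp (-(((x + m) ^ (1 - β) - x ^ (1 - β)) / (C₁ * (1 - β)))) := by
        simp only [x, add_right_comm _ _ (2 : ℝ)]
    _ ≤ 12 * (1 + 2 * C₁ * x ^ β) ^ 4 + T :=
        tsum_add_two_pow_three_mul_exp_neg_rpow_increment_le (by linarith) hβ0 (by linarith) hC₁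
    _ ≤ 12 * ((1 + 2 * C₁) ^ 4 * x ^ (5 * β)) + T * x ^ (5 * β) := by
        gcongr
        exact le_mul_of_one_le_right hT (one_le_rpow hx (by linarith))
    _ = (12 * (1 + 2 * C₁) ^ 4 + T) * x ^ (5 * β) := by ring
end

section
/- Let δ ∈ (1/3, 1), c ≥ 0 and b > 0, let f: ℕ → ℝ satisfy f(i) ≤ b·log²(i+1) for all i, and define θ̃(n) = n^{−δ} Σ_{i=0}^{n−1} f(i) for n ≥ 1. Suppose there exists a strictly increasing sequence (n_k)_{k≥1} of positive integers such that θ̃(n_k) < c for every k and lim_{k→∞} (n_{k+1} − n_k)/n_k^{1/3} = 0. Then limsup_{n→∞} θ̃(n) ≤ c. -/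
open Filter Finset Real Topology

/-!
On a block `n_k ≤ n < n_{k+1}` the partial sum `S(n)` exceeds `S(n_k) ≤ c n_k^δ` by at most
`(n_{k+1} - n_k) b log² n_{k+1}`, and dividing by `n^δ ≥ n_k^δ` gives
`θ̃(n) ≤ c + b (n_{k+1} - n_k) log² n_{k+1} / n_k^δ`. Since the gap is `o(n_k^{1/3})`, eventually
`n_{k+1} ≤ n_k²`, so the error is `o(1) · log² n_k · n_k^{1/3 - δ}`, which tends to `0` because
`δ > 1/3`.
-/

lemma sum_range_le_sum_range_add_mul {f : ℕ → ℝ} {B : ℝ} {m n : ℕ} (hmn : m ≤ n)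
    (hf : ∀ i ∈ Ico m n, f i ≤ B) :
    ∑ i ∈ range n, f i ≤ ∑ i ∈ range m, f i + (n - m) * B := by
  rw [← sum_range_add_sum_Ico f hmn, ← Nat.cast_sub hmn, ← Nat.card_Ico, ← nsmul_eq_mul]
  gcongr
  exact sum_le_card_nsmul _ _ _ hf

lemma div_rpow_le_add_div_rpow {s t c D m n δ : ℝ} (hm : 0 < m) (hmn : m ≤ n) (hδ : 0 ≤ δ)
    (hc : 0 ≤ c) (hs : s / m ^ δ ≤ c) (hD : 0 ≤ D) (ht : t ≤ s + D) :
    t / n ^ δ ≤ c + D / m ^ δ := by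
  have hmδ : 0 < m ^ δ := rpow_pos_of_pos hm δ
  have hmnδ : m ^ δ ≤ n ^ δ := rpow_le_rpow hm.le hmn hδ
  have hs' : s / n ^ δ ≤ c := by
    rcases le_or_gt 0 s with hs0 | hs0
    · exact (div_le_div_of_nonneg_left hs0 hmδ hmnδ).trans hs
    · exact (div_neg_of_neg_of_pos hs0 (hmδ.trans_le hmnδ)).le.trans hc
  calc t / n ^ δ ≤ (s + D) / n ^ δ := div_le_div_of_nonneg_right ht (hmδ.trans_le hmnδ).le
    _ = s / n ^ δ + D / n ^ δ := add_div _ _ _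
    _ ≤ c + D / m ^ δ := add_le_add hs' (div_le_div_of_nonneg_left hD hmδ hmnδ)

lemma StrictMono.exists_mem_Ico {u : ℕ → ℕ} (hu : StrictMono u) {K n : ℕ} (hn : u K ≤ n) :
    ∃ k, K ≤ k ∧ n ∈ Set.Ico (u k) (u (k + 1)) := by
  have hex : ∃ j, n < u j := ⟨n + 1, hu.le_apply.trans_lt (hu (Nat.lt_succ_self n))⟩
  have hK : K < Nat.find hex := by
    by_contra! h
    exact (Nat.find_spec hex).not_ge ((hu.monotone h).trans hn)
  obtain ⟨k, hk⟩ : ∃ k, Nat.find hex = k + 1 := Nat.exists_eq_succ_of_ne_zero (by omega)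
  refine ⟨k, by omega, not_lt.mp (Nat.find_min hex (by omega)), hk ▸ Nat.find_spec hex⟩

lemma EReal.limsup_le_of_forall_eventually_le {g : ℕ → ℝ} {c : ℝ}
    (h : ∀ ε > 0, ∀ᶠ n in atTop, g n ≤ c + ε) :
    limsup (fun n => (g n : EReal)) atTop ≤ c := by
  refine EReal.le_of_forall_lt_iff_le.mp fun d hcd => limsup_le_of_le (by isBoundedDefault) ?_
  have hcd' : c < d := EReal.coe_lt_coe_iff.mp hcd
  filter_upwards [h (d - c) (by linarith)] with n hn
  exact_mod_cast hn.trans (by linarith)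

lemma limsup_le_of_forall_mem_Ico_le {g : ℕ → ℝ} {u : ℕ → ℕ} (hu : StrictMono u) {c : ℝ}
    {e : ℕ → ℝ} (he : Tendsto e atTop (𝓝 0))
    (hg : ∀ k, ∀ n ∈ Set.Ico (u k) (u (k + 1)), g n ≤ c + e k) :
    limsup (fun n => (g n : EReal)) atTop ≤ c := by
  refine EReal.limsup_le_of_forall_eventually_le fun ε hε => ?_
  obtain ⟨K, hK⟩ := eventually_atTop.mp (he.eventually (ge_mem_nhds hε))
  filter_upwards [eventually_ge_atTop (u K)] with n hn
  obtain ⟨k, hKk, hnk⟩ := hu.exists_mem_Ico hn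
  linarith [hg k n hnk, hK k hKk]

lemma tendsto_log_sq_mul_rpow_neg_atTop {ε : ℝ} (hε : 0 < ε) :
    Tendsto (fun x : ℝ => log x ^ 2 * x ^ (-ε)) atTop (𝓝 0) := by
  refine (isLittleO_log_rpow_rpow_atTop 2 hε).tendsto_div_nhds_zero.congr' ?_
  filter_upwards [eventually_gt_atTop 0] with x hx
  rw [rpow_neg hx.le, ← div_eq_mul_inv, rpow_two]

lemma tendsto_gap_mul_log_sq_div_rpow {u : ℕ → ℕ} (hu : StrictMono u) {α δ : ℝ} (hα : α ≤ 1)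
    (hαδ : α < δ)
    (hgap : Tendsto (fun k => ((u (k + 1) : ℝ) - u k) / (u k : ℝ) ^ α) atTop (𝓝 0)) :
    Tendsto (fun k => ((u (k + 1) : ℝ) - u k) * log (u (k + 1)) ^ 2 / (u k : ℝ) ^ δ)
      atTop (𝓝 0) := by
  have hu_top : Tendsto (fun k => (u k : ℝ)) atTop atTop :=
    tendsto_natCast_atTop_atTop.comp hu.tendsto_atTop
  have hbound : Tendsto (fun k => ((u (k + 1) : ℝ) - u k) / (u k : ℝ) ^ α *
      (4 * (log (u k) ^ 2 * (u k : ℝ) ^ (-(δ - α))))) atTop (𝓝 0) := by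
    simpa using hgap.mul
      (((tendsto_log_sq_mul_rpow_neg_atTop (sub_pos.mpr hαδ)).comp hu_top).const_mul 4)
  refine squeeze_zero' (Eventually.of_forall fun k => ?_) ?_ hbound
  · have hmono : (u k : ℝ) ≤ u (k + 1) := Nat.cast_le.mpr (hu.monotone k.le_succ)
    exact div_nonneg (mul_nonneg (sub_nonneg.mpr hmono) (sq_nonneg _)) (by positivity)
  filter_upwards [hgap.eventually (eventually_le_nhds one_pos), hu_top.eventually_ge_atTop 2]
    with k hgap_le hu2
  set x : ℝ := ((u k : ℕ) : ℝ)
  set y : ℝ := ((u (k + 1) : ℕ) : ℝ)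
  have hx : 0 < x := by linarith
  have hxy : x ≤ y := Nat.cast_le.mpr (hu.monotone k.le_succ)
  have hxα : 0 < x ^ α := rpow_pos_of_pos hx α
  have hyx : y ≤ x ^ 2 := by
    have : x ^ α ≤ x := by
      simpa using rpow_le_rpow_of_exponent_le (by linarith : (1 : ℝ) ≤ x) hα
    nlinarith [(div_le_one hxα).mp hgap_le]
  have hlog : log y ≤ 2 * log x := by
    simpa [log_pow] using log_le_log (hx.trans_le hxy) hyx
  have hlog_sq : log y ^ 2 ≤ 4 * log x ^ 2 := by
    nlinarith [log_nonneg (by linarith : (1 : ℝ) ≤ y)]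
  calc (y - x) * log y ^ 2 / x ^ δ = (y - x) / x ^ α * (log y ^ 2 * x ^ (-(δ - α))) := by
        rw [rpow_neg hx.le, rpow_sub hx]
        field_simp
    _ ≤ (y - x) / x ^ α * (4 * (log x ^ 2 * x ^ (-(δ - α)))) := by
        refine mul_le_mul_of_nonneg_left ?_ (div_nonneg (by linarith) hxα.le)
        rw [← mul_assoc]
        exact mul_le_mul_of_nonneg_right hlog_sq (by positivity)

lemma sum_range_div_rpow_le_of_mem_Ico {f : ℕ → ℝ} {b c δ : ℝ} (hb : 0 ≤ b) (hc : 0 ≤ c)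
    (hδ : 0 ≤ δ) (hf : ∀ i : ℕ, f i ≤ b * log ((i : ℝ) + 1) ^ 2) {m m' n : ℕ} (hm : 0 < m)
    (hbelow : (∑ i ∈ range m, f i) / (m : ℝ) ^ δ ≤ c) (hn : n ∈ Set.Ico m m') :
    (∑ i ∈ range n, f i) / (n : ℝ) ^ δ ≤
      c + b * (((m' : ℝ) - m) * log m' ^ 2 / (m : ℝ) ^ δ) := by
  have hmn : (m : ℝ) ≤ n := Nat.cast_le.mpr hn.1
  have hnm' : (n : ℝ) ≤ m' := Nat.cast_le.mpr hn.2.le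
  have hf' : ∀ i ∈ Ico m n, f i ≤ b * log m' ^ 2 := fun i hi => by
    have hi : (i : ℝ) + 1 ≤ m' := by exact_mod_cast (mem_Ico.mp hi).2.trans hn.2
    have hlog : log ((i : ℝ) + 1) ≤ log m' := log_le_log (by positivity) hi
    have hlog0 : 0 ≤ log ((i : ℝ) + 1) := log_nonneg (le_add_of_nonneg_left i.cast_nonneg)
    exact (hf i).trans (mul_le_mul_of_nonneg_left (pow_le_pow_left₀ hlog0 hlog 2) hb)
  rw [← mul_div_assoc, mul_left_comm]
  refine div_rpow_le_add_div_rpow (Nat.cast_pos.mpr hm) hmn hδ hc hbelow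
    (mul_nonneg (by linarith) (by positivity)) ?_
  refine (sum_range_le_sum_range_add_mul hn.1 hf').trans ?_
  gcongr

theorem stmt_17_general (δ c b : ℝ) (hδl : 1 / 3 < δ) (hc : 0 ≤ c) (hb : 0 < b)
    (f : ℕ → ℝ) (hf : ∀ i : ℕ, f i ≤ b * (Real.log ((i : ℝ) + 1)) ^ 2)
    (nk : ℕ → ℕ) (hmono : StrictMono nk) (hpos : ∀ k, 0 < nk k)
    (hbelow : ∀ k, (∑ i ∈ Finset.range (nk k), f i) / (nk k : ℝ) ^ δ < c)
    (hgap : Tendsto (fun k : ℕ => ((nk (k + 1) : ℝ) - (nk k : ℝ)) / (nk k : ℝ) ^ ((1 : ℝ) / 3))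
      atTop (nhds 0)) :
    limsup (fun n : ℕ =>
        (((∑ i ∈ Finset.range n, f i) / (n : ℝ) ^ δ : ℝ) : EReal)) atTop ≤ (c : EReal) := by
  have hδ : 0 ≤ δ := by linarith
  refine limsup_le_of_forall_mem_Ico_le hmono ?_ fun k n hn =>
    sum_range_div_rpow_le_of_mem_Ico hb.le hc hδ hf (hpos k) (hbelow k).le hn
  simpa using (tendsto_gap_mul_log_sq_div_rpow hmono (by norm_num) hδl hgap).const_mul b

/-- Final deterministic step of Theorem 3: if the pseudo average θ̃(n) = n^{−δ} Σ_{i<n} f(i),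
built from summands bounded by b·log²(i+1), returns below the nonnegative level c at a
strictly increasing sequence of times n_k whose gaps are o(n_k^{1/3}), then
limsup θ̃(n) ≤ c. -/
theorem stmt_17 (δ c b : ℝ) (hδl : 1 / 3 < δ) (hδu : δ < 1) (hc : 0 ≤ c) (hb : 0 < b)
    (f : ℕ → ℝ) (hf : ∀ i : ℕ, f i ≤ b * (Real.log ((i : ℝ) + 1)) ^ 2)
    (nk : ℕ → ℕ) (hmono : StrictMono nk) (hpos : ∀ k, 0 < nk k)
    (hbelow : ∀ k, (∑ i ∈ Finset.range (nk k), f i) / (nk k : ℝ) ^ δ < c)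
    (hgap : Tendsto (fun k : ℕ => ((nk (k + 1) : ℝ) - (nk k : ℝ)) / (nk k : ℝ) ^ ((1 : ℝ) / 3))
      atTop (nhds 0)) :
    limsup (fun n : ℕ =>
        (((∑ i ∈ Finset.range n, f i) / (n : ℝ) ^ δ : ℝ) : EReal)) atTop ≤ (c : EReal) :=
  stmt_17_general δ c b hδl hc hb f hf nk hmono hpos hbelow hgap
end
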